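/- For every integer n ≥ 1 and all points x, y₁, …, y_n ∈ ℝ³ one has the quadratic bound |fl_n(x, y₁, …, y_n)| ≤ (|x − y₁| + |y₁ − y₂| + ⋯ + |y_{n−1} − y_n|)², where |·| is the Euclidean norm on ℝ³. -/

import Mathlib

noncomputable section

/-- The magnetic phase `φ(x,x') = (x₂x₁' − x₁x₂')/2`. -/
def phi (x x' : EuclideanSpace ℝ (Fin 3)) : ℝ := (x 1 * x' 0 - x 0 * x' 1) / 2

/-- `fl_n(x,y₁,…,y_n) = φ(x,y₁) + φ(y₁,y₂) + ⋯ + φ(y_{n−1},y_n) + φ(y_n,x)`,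
where the points `y₁,…,y_n` are the values `y 1, …, y n`. -/
def fln (n : ℕ) (x : EuclideanSpace ℝ (Fin 3)) (y : ℕ → EuclideanSpace ℝ (Fin 3)) : ℝ :=
  phi x (y 1) + (∑ k ∈ Finset.Ico 1 n, phi (y k) (y (k + 1))) + phi (y n) x

/-! `fl_n` is minus the signed area of the projection of the closed polygon `x, y₁, …, y_n` to
the `(x₁,x₂)`-plane. Since `φ` is bilinear and antisymmetric, it is invariant under translation
and equals `∑ₖ φ(yₖ − x, yₖ₊₁ − yₖ)`. Each term is at most `|yₖ − x| |yₖ₊₁ − yₖ|`, and every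
`|yₖ − x|` is bounded by the length `L` of the path `x, y₁, …, y_n`, so the sum is at most `L²`. -/

lemma abs_phi_le (a b : EuclideanSpace ℝ (Fin 3)) : |phi a b| ≤ ‖a‖ * ‖b‖ := by
  have abs_apply_le (v : EuclideanSpace ℝ (Fin 3)) (i : Fin 3) : |v i| ≤ ‖v‖ :=
    (Real.norm_eq_abs (v i)).symm.le.trans (PiLp.norm_apply_le v i)
  calc |phi a b| ≤ (|a 1| * |b 0| + |a 0| * |b 1|) / 2 := by
        rw [phi, abs_div, abs_two, ← abs_mul, ← abs_mul]
        gcongr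
        exact abs_sub _ _
    _ ≤ (‖a‖ * ‖b‖ + ‖a‖ * ‖b‖) / 2 := by gcongr <;> apply abs_apply_le
    _ = ‖a‖ * ‖b‖ := by ring

lemma fln_eq_sum_phi_sub {n : ℕ} (hn : 1 ≤ n) (x : EuclideanSpace ℝ (Fin 3))
    (y : ℕ → EuclideanSpace ℝ (Fin 3)) :
    fln n x y = ∑ k ∈ Finset.Ico 1 n, phi (y k - x) (y (k + 1) - y k) := by
  induction n, hn using Nat.le_induction with
  | base =>
    simp only [fln, phi, Finset.Ico_self, Finset.sum_empty]
    ring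
  | succ n hn ih =>
    rw [Finset.sum_Ico_succ_top hn, ← ih]
    simp only [fln, Finset.sum_Ico_succ_top hn, phi, PiLp.sub_apply]
    ring

lemma norm_sub_le_norm_sub_add_sum_norm_sub {E : Type*} [SeminormedAddCommGroup E] (x : E)
    (y : ℕ → E) {k n : ℕ} (hk : 1 ≤ k) (hkn : k ≤ n) :
    ‖y k - x‖ ≤ ‖x - y 1‖ + ∑ j ∈ Finset.Ico 1 n, ‖y j - y (j + 1)‖ := by
  have hpath : ‖y k - y 1‖ ≤ ∑ j ∈ Finset.Ico 1 k, ‖y j - y (j + 1)‖ := by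
    simpa only [dist_eq_norm, norm_sub_rev (y 1)] using dist_le_Ico_sum_dist y hk
  calc ‖y k - x‖ ≤ ‖x - y 1‖ + ‖y k - y 1‖ := by
        rw [add_comm, norm_sub_rev x]
        exact norm_sub_le_norm_sub_add_norm_sub _ _ _
    _ ≤ ‖x - y 1‖ + ∑ j ∈ Finset.Ico 1 n, ‖y j - y (j + 1)‖ := by
        gcongr
        refine hpath.trans (Finset.sum_le_sum_of_subset_of_nonneg ?_ fun _ _ _ => norm_nonneg _)
        exact Finset.Ico_subset_Ico_right hkn

theorem fln_quadratic_bound (n : ℕ) (hn : 1 ≤ n) (x : EuclideanSpace ℝ (Fin 3))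
    (y : ℕ → EuclideanSpace ℝ (Fin 3)) :
    |fln n x y| ≤ (‖x - y 1‖ + ∑ k ∈ Finset.Ico 1 n, ‖y k - y (k + 1)‖) ^ 2 := by
  set L := ‖x - y 1‖ + ∑ k ∈ Finset.Ico 1 n, ‖y k - y (k + 1)‖
  have hradius (k : ℕ) (hk : k ∈ Finset.Ico 1 n) : ‖y k - x‖ ≤ L := by
    obtain ⟨h1k, hkn⟩ := Finset.mem_Ico.1 hk
    exact norm_sub_le_norm_sub_add_sum_norm_sub x y h1k hkn.le
  calc |fln n x y| = |∑ k ∈ Finset.Ico 1 n, phi (y k - x) (y (k + 1) - y k)| := by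
        rw [fln_eq_sum_phi_sub hn]
    _ ≤ ∑ k ∈ Finset.Ico 1 n, ‖y k - x‖ * ‖y k - y (k + 1)‖ := by
        refine (Finset.abs_sum_le_sum_abs _ _).trans (Finset.sum_le_sum fun k _ => ?_)
        rw [norm_sub_rev (y k) (y (k + 1))]
        exact abs_phi_le _ _
    _ ≤ ∑ k ∈ Finset.Ico 1 n, L * ‖y k - y (k + 1)‖ := by
        gcongr with k hk
        exact hradius k hk
    _ = L * ∑ k ∈ Finset.Ico 1 n, ‖y k - y (k + 1)‖ := (Finset.mul_sum _ _ _).symm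
    _ ≤ L * L := by
        gcongr
        exact le_add_of_nonneg_left (norm_nonneg _)
    _ = L ^ 2 := (sq L).symm
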